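/- Let β > 0, c ≥ 0, and let (α_n) be a sequence of nonnegative reals with lim_{n→∞} α_n = c. Then the probability measures ν_{β,α_n} converge weakly to ν_{β,c}: for every bounded continuous function f : ℝ → ℝ, lim_{n→∞} ∫_ℝ f(t)·f_{β,α_n}(t) dt = ∫_ℝ f(t)·f_{β,c}(t) dt. -/

import Mathlib

open MeasureTheory Real Filter Topology

/-- Left endpoint `a` of the support. -/
noncomputable def endA (β c : ℝ) : ℝ :=
  Real.sqrt (β / 2) * Real.sqrt (1 + 2 * c / β - Real.sqrt (1 + 4 * c / β))

/-- Right endpoint `b` of the support. -/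
noncomputable def endB (β c : ℝ) : ℝ :=
  Real.sqrt (β / 2) * Real.sqrt (1 + 2 * c / β + Real.sqrt (1 + 4 * c / β))

/-- The support `S = [−b,−a] ∪ [a,b]`. -/
def suppS (β c : ℝ) : Set ℝ :=
  Set.Icc (-(endB β c)) (-(endA β c)) ∪ Set.Icc (endA β c) (endB β c)

/-- The density `f_{β,c}` of the equilibrium measure `ν_{β,c}`. -/
noncomputable def densf (β c t : ℝ) : ℝ :=
  (suppS β c).indicator (fun t =>
    (2 / (Real.pi * β)) * (1 / |t|) *
      Real.sqrt ((t ^ 2 - endA β c ^ 2) * (endB β c ^ 2 - t ^ 2))) t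

/-! Outside `S` the product `(t² − a²)(b² − t²)` is nonpositive, so its square root vanishes and the
indicator in `densf` is redundant: `densf β c t` is given by one closed formula, which is continuous
in `c` for every fixed `t`. Moreover `|densf β c t| ≤ |2/(πβ)| · b` and `densf β c` vanishes beyond
`b`, which depends continuously on `c`; so eventually all `f · densf β (α n)` are bounded by one
constant and supported in one compact interval, and bounded convergence applies. -/

theorem tendsto_integral_of_norm_le_const_of_support_subset {α E ι : Type*} [MeasurableSpace α]
    {μ : Measure α} [NormedAddCommGroup E] [NormedSpace ℝ E] {l : Filter ι}
    [l.IsCountablyGenerated] {F : ι → α → E} {g : α → E} {s : Set α} (hμs : μ s < ⊤) {C : ℝ}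
    (hF_meas : ∀ᶠ n in l, AEStronglyMeasurable (F n) μ)
    (hF_bound : ∀ᶠ n in l, ∀ x, ‖F n x‖ ≤ C)
    (hF_supp : ∀ᶠ n in l, ∀ x ∉ s, F n x = 0) (hg_supp : ∀ x ∉ s, g x = 0)
    (hlim : ∀ᵐ x ∂μ, Tendsto (fun n => F n x) l (𝓝 (g x))) :
    Tendsto (fun n => ∫ x, F n x ∂μ) l (𝓝 (∫ x, g x ∂μ)) := by
  have : Fact (μ s < ⊤) := ⟨hμs⟩
  rw [← setIntegral_eq_integral_of_forall_compl_eq_zero hg_supp]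
  refine (tendsto_integral_filter_of_norm_le_const (μ := μ.restrict s)
    (hF_meas.mono fun n hn => hn.restrict) ⟨C, hF_bound.mono fun n hn => ae_of_all _ hn⟩
    (ae_restrict_of_ae hlim)).congr' ?_
  filter_upwards [hF_supp] with n hn
  exact setIntegral_eq_integral_of_forall_compl_eq_zero hn

lemma endA_nonneg (β c : ℝ) : 0 ≤ endA β c := by
  unfold endA; positivity

lemma endA_le_endB (β c : ℝ) : endA β c ≤ endB β c := by
  unfold endA endB
  gcongr
  linarith [Real.sqrt_nonneg (1 + 4 * c / β)]

lemma endB_nonneg (β c : ℝ) : 0 ≤ endB β c :=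
  (endA_nonneg β c).trans (endA_le_endB β c)

@[fun_prop]
lemma continuous_endA (β : ℝ) : Continuous (endA β) := by
  unfold endA; fun_prop

@[fun_prop]
lemma continuous_endB (β : ℝ) : Continuous (endB β) := by
  unfold endB; fun_prop

lemma mem_suppS_of_mul_pos {β c t : ℝ}
    (h : 0 < (t ^ 2 - endA β c ^ 2) * (endB β c ^ 2 - t ^ 2)) : t ∈ suppS β c := by
  have hA := endA_nonneg β c
  have hAB := endA_le_endB β c
  have ht : endA β c ^ 2 < t ^ 2 ∧ t ^ 2 < endB β c ^ 2 := by
    rcases pos_and_pos_or_neg_and_neg_of_mul_pos h with ⟨h1, h2⟩ | ⟨h1, h2⟩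
    · constructor <;> linarith
    · nlinarith
  obtain ⟨h1, h2⟩ := ht
  rcases le_total 0 t with h0 | h0
  · exact Or.inr ⟨by nlinarith, by nlinarith⟩
  · exact Or.inl ⟨by nlinarith, by nlinarith⟩

lemma densf_eq (β c t : ℝ) :
    densf β c t = 2 / (π * β) * (1 / |t|) *
      √((t ^ 2 - endA β c ^ 2) * (endB β c ^ 2 - t ^ 2)) := by
  by_cases h : t ∈ suppS β c
  · exact Set.indicator_of_mem h _
  · rw [densf, Set.indicator_of_notMem h,
      Real.sqrt_eq_zero'.2 (not_lt.1 (mt mem_suppS_of_mul_pos h)), mul_zero]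

lemma continuous_densf_param (β t : ℝ) : Continuous fun c => densf β c t := by
  simp_rw [densf_eq]
  fun_prop

lemma measurable_densf (β c : ℝ) : Measurable (densf β c) := by
  simp_rw [funext (densf_eq β c)]
  fun_prop

lemma densf_eq_zero_of_endB_lt {β c t : ℝ} (h : endB β c < |t|) : densf β c t = 0 := by
  have hB := endB_nonneg β c
  have hAB := endA_le_endB β c
  have hA := endA_nonneg β c
  have ht : endB β c ^ 2 < t ^ 2 := by nlinarith [sq_abs t]
  have hAB2 : endA β c ^ 2 ≤ endB β c ^ 2 := pow_le_pow_left₀ hA hAB 2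
  rw [densf_eq, Real.sqrt_eq_zero'.2 (mul_nonpos_of_nonneg_of_nonpos (by linarith) (by linarith)),
    mul_zero]

lemma sqrt_mul_sq_sub_le {a b t : ℝ} (ha : 0 ≤ a) (hab : a ≤ b) :
    √((t ^ 2 - a ^ 2) * (b ^ 2 - t ^ 2)) ≤ |t| * b := by
  rw [Real.sqrt_le_iff]
  refine ⟨mul_nonneg (abs_nonneg t) (ha.trans hab), ?_⟩
  nlinarith [sq_abs t, sq_nonneg (t ^ 2 - a ^ 2), mul_le_mul hab hab ha (ha.trans hab)]

lemma abs_densf_le (β c t : ℝ) : |densf β c t| ≤ |2 / (π * β)| * endB β c := by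
  have hB := endB_nonneg β c
  rcases eq_or_ne t 0 with rfl | ht
  · simp only [densf_eq, abs_zero, div_zero, mul_zero, zero_mul, abs_zero]
    positivity
  calc |densf β c t|
      = |2 / (π * β)| * (1 / |t|) * √((t ^ 2 - endA β c ^ 2) * (endB β c ^ 2 - t ^ 2)) := by
        rw [densf_eq, abs_mul, abs_mul, abs_of_nonneg (Real.sqrt_nonneg _),
          abs_of_nonneg (one_div_nonneg.2 (abs_nonneg t))]
    _ ≤ |2 / (π * β)| * (1 / |t|) * (|t| * endB β c) := by
        gcongr
        exact sqrt_mul_sq_sub_le (endA_nonneg β c) (endA_le_endB β c)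
    _ = |2 / (π * β)| * endB β c := by
        field_simp

theorem stmt_6 (β c : ℝ) (α : ℕ → ℝ) (hlim : Filter.Tendsto α Filter.atTop (nhds c))
    (f : ℝ → ℝ) (hf : Continuous f) (hbd : ∃ M : ℝ, ∀ x, |f x| ≤ M) :
    Filter.Tendsto (fun n => ∫ t : ℝ, f t * densf β (α n) t) Filter.atTop
      (nhds (∫ t : ℝ, f t * densf β c t)) := by
  obtain ⟨M, hM⟩ := hbd
  set R := endB β c + 1
  have hR : ∀ᶠ n in atTop, endB β (α n) < R :=
    ((continuous_endB β).tendsto c).comp hlim |>.eventually_lt_const (lt_add_one _)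
  have hvanish {c' : ℝ} (hc' : endB β c' < R) : ∀ t ∉ Set.Icc (-R) R, f t * densf β c' t = 0 :=
    fun t ht => by
      rw [densf_eq_zero_of_endB_lt (hc'.trans (lt_of_not_ge fun h => ht (abs_le.1 h))), mul_zero]
  refine tendsto_integral_of_norm_le_const_of_support_subset (C := M * (|2 / (π * β)| * R))
    measure_Icc_lt_top
    (.of_forall fun n => hf.aestronglyMeasurable.mul (measurable_densf β _).aestronglyMeasurable)
    ?_ (hR.mono fun n => hvanish) (hvanish (lt_add_one _)) (.of_forall fun t => ?_)
  · filter_upwards [hR] with n hn t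
    rw [Real.norm_eq_abs, abs_mul]
    exact mul_le_mul (hM t) ((abs_densf_le β _ t).trans (by gcongr)) (abs_nonneg _)
      ((abs_nonneg _).trans (hM t))
  · exact (((continuous_densf_param β t).tendsto c).comp hlim).const_mul (f t)
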